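/- Shorting and cutting laws for infinite networks: Let G be a network, let p ≠ q be vertices of G, and let S be any finite set of vertices containing p and q. Then R_short(p,q,S) ≤ odd_res(p,q) ≤ even_res(p,q) ≤ R_cut(p,q,S) (as elements of [0,∞]). -/

import Mathlib

open scoped ENNReal
open Filter

variable {V : Type*}

/-- A *flow* on a graph: an antisymmetric function on ordered pairs of vertices
that vanishes on non-adjacent pairs. -/
def IsFlow (G : SimpleGraph V) (θ : V → V → ℝ) : Prop :=
  (∀ u v, θ u v = -θ v u) ∧ ∀ u v, ¬G.Adj u v → θ u v = 0

/-- The divergence (source strength) of a flow at a vertex. -/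
noncomputable def divg (G : SimpleGraph V) [G.LocallyFinite] (θ : V → V → ℝ) (v : V) : ℝ :=
  ∑ u ∈ G.neighborFinset v, θ v u

/-- The energy `(1/2) ∑ r(u,v) θ(u,v)²` dissipated by a flow, valued in `[0,∞]`. -/
noncomputable def energy (r θ : V → V → ℝ) : ℝ≥0∞ :=
  2⁻¹ * ∑' p : V × V, ENNReal.ofReal (r p.1 p.2 * θ p.1 p.2 ^ 2)

open Classical in
/-- The source distribution with a unit source at `p` and a unit sink at `q`. -/
noncomputable def pointSource (p q v : V) : ℝ :=
  if v = p then 1 else if v = q then -1 else 0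

/-- The odd resistance: the infimum of the energy over all finite-energy unit
flows from `p` to `q`. -/
noncomputable def oddRes (G : SimpleGraph V) [G.LocallyFinite] (r : V → V → ℝ)
    (p q : V) : ℝ≥0∞ :=
  ⨅ (θ : V → V → ℝ) (_ : IsFlow G θ ∧ energy r θ ≠ ⊤ ∧ divg G θ = pointSource p q),
    energy r θ

/-- The cut resistance: the infimum of the energy over all unit flows from `p` to `q`
vanishing on every edge with an endpoint outside `S`. -/
noncomputable def cutRes (G : SimpleGraph V) [G.LocallyFinite] (r : V → V → ℝ)
    (p q : V) (S : Finset V) : ℝ≥0∞ :=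
  ⨅ (θ : V → V → ℝ) (_ : IsFlow G θ ∧ divg G θ = pointSource p q ∧
      ∀ u v, (u ∉ S ∨ v ∉ S) → θ u v = 0), energy r θ

/-- The even resistance: the infimum of the cut resistances over all finite
vertex sets containing `p` and `q`. -/
noncomputable def evenRes (G : SimpleGraph V) [G.LocallyFinite] (r : V → V → ℝ)
    (p q : V) : ℝ≥0∞ :=
  ⨅ (S : Finset V) (_ : p ∈ S ∧ q ∈ S), cutRes G r p q S

/-- The short resistance: the infimum of the energy over all antisymmetric edge
functions supported on edges with at least one endpoint in `S` whose divergence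
at every vertex of `S` is that of a unit flow from `p` to `q`. -/
noncomputable def shortRes (G : SimpleGraph V) [G.LocallyFinite] (r : V → V → ℝ)
    (p q : V) (S : Finset V) : ℝ≥0∞ :=
  ⨅ (θ : V → V → ℝ) (_ : (∀ u v, θ u v = -θ v u) ∧ (∀ u v, ¬G.Adj u v → θ u v = 0) ∧
      (∀ u v, u ∉ S → v ∉ S → θ u v = 0) ∧
      ∀ v ∈ S, divg G θ v = pointSource p q v), energy r θ

/-- A function on the vertices of a network is harmonic if the net current it
induces out of each vertex is zero. -/
def Harmonic (G : SimpleGraph V) [G.LocallyFinite] (r : V → V → ℝ) (u : V → ℝ) : Prop :=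
  ∀ v, ∑ w ∈ G.neighborFinset v, (u v - u w) / r v w = 0

open Classical in
/-- The Dirichlet energy `(1/2) ∑ (u(v)-u(w))²/r(v,w)` of a function on the vertices. -/
noncomputable def fnEnergy (G : SimpleGraph V) (r : V → V → ℝ) (u : V → ℝ) : ℝ≥0∞ :=
  2⁻¹ * ∑' p : V × V,
    if G.Adj p.1 p.2 then ENNReal.ofReal ((u p.1 - u p.2) ^ 2 / r p.1 p.2) else 0

/-!
Each inequality compares infima over classes of flows. A flow supported inside `S` is a
finite-energy unit flow, so `odd_res ≤ R_cut(S)` for every `S`, and taking the infimum gives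
`odd_res ≤ even_res`; `even_res ≤ R_cut(S)` is one term of that infimum. Conversely, restricting
a unit flow to the edges touching `S` keeps its divergence on `S` and can only lower its energy,
so it is admissible for `R_short(S)`.
-/

lemma energy_le_of_eq_or_eq_zero {r θ θ' : V → V → ℝ}
    (h : ∀ u v, θ' u v = θ u v ∨ θ' u v = 0) : energy r θ' ≤ energy r θ := by
  refine mul_le_mul_right (ENNReal.tsum_le_tsum fun e => ?_) _
  rcases h e.1 e.2 with h | h <;> simp [h]

lemma energy_ne_top_of_vanish_off {r θ : V → V → ℝ} (S : Finset V)
    (hθ : ∀ u v, (u ∉ S ∨ v ∉ S) → θ u v = 0) : energy r θ ≠ ⊤ := by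
  have hsum : ∑' e : V × V, ENNReal.ofReal (r e.1 e.2 * θ e.1 e.2 ^ 2) =
      ∑ e ∈ S ×ˢ S, ENNReal.ofReal (r e.1 e.2 * θ e.1 e.2 ^ 2) := by
    refine tsum_eq_sum fun e he => ?_
    rw [Finset.mem_product, not_and_or] at he
    simp [hθ e.1 e.2 he]
  rw [energy, hsum]
  exact ENNReal.mul_ne_top (by simp) (ENNReal.sum_lt_top.mpr fun _ _ => ENNReal.ofReal_lt_top).ne

section Restriction

variable (S : Finset V)

open Classical in
noncomputable def restrictNear (θ : V → V → ℝ) (u v : V) : ℝ :=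
  if u ∈ S ∨ v ∈ S then θ u v else 0

variable {S}

lemma restrictNear_antisymm {θ : V → V → ℝ} (hθ : ∀ u v, θ u v = -θ v u) (u v : V) :
    restrictNear S θ u v = -restrictNear S θ v u := by
  by_cases hu : u ∈ S <;> by_cases hv : v ∈ S <;> simp [restrictNear, hu, hv, hθ u v]

lemma restrictNear_of_not_adj {G : SimpleGraph V} {θ : V → V → ℝ}
    (hθ : ∀ u v, ¬G.Adj u v → θ u v = 0) {u v : V} (huv : ¬G.Adj u v) :
    restrictNear S θ u v = 0 := by
  unfold restrictNear
  split_ifs <;> simp [hθ u v huv]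

lemma restrictNear_of_notMem {θ : V → V → ℝ} {u v : V} (hu : u ∉ S) (hv : v ∉ S) :
    restrictNear S θ u v = 0 := by
  simp [restrictNear, hu, hv]

lemma restrictNear_eq_or_eq_zero (θ : V → V → ℝ) (u v : V) :
    restrictNear S θ u v = θ u v ∨ restrictNear S θ u v = 0 := by
  unfold restrictNear
  split_ifs <;> simp

lemma divg_restrictNear_of_mem (G : SimpleGraph V) [G.LocallyFinite] (θ : V → V → ℝ)
    {v : V} (hv : v ∈ S) : divg G (restrictNear S θ) v = divg G θ v :=
  Finset.sum_congr rfl fun _ _ => by simp [restrictNear, hv]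

end Restriction

section Resistances

variable {G : SimpleGraph V} [G.LocallyFinite] {r : V → V → ℝ} {p q : V}

lemma shortRes_le_energy (S : Finset V) {θ : V → V → ℝ} (hθ : IsFlow G θ)
    (hdiv : divg G θ = pointSource p q) : shortRes G r p q S ≤ energy r θ :=
  (iInf₂_le (restrictNear S θ)
      ⟨restrictNear_antisymm hθ.1, fun _ _ => restrictNear_of_not_adj hθ.2,
        fun _ _ => restrictNear_of_notMem,
        fun v hv => (divg_restrictNear_of_mem G θ hv).trans (congrFun hdiv v)⟩).trans
    (energy_le_of_eq_or_eq_zero (restrictNear_eq_or_eq_zero θ))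

lemma shortRes_le_oddRes (S : Finset V) : shortRes G r p q S ≤ oddRes G r p q :=
  le_iInf₂ fun _ hθ => shortRes_le_energy S hθ.1 hθ.2.2

lemma oddRes_le_cutRes (S : Finset V) : oddRes G r p q ≤ cutRes G r p q S :=
  le_iInf₂ fun _ ⟨hflow, hdiv, hvan⟩ =>
    iInf₂_le _ ⟨hflow, energy_ne_top_of_vanish_off S hvan, hdiv⟩

lemma oddRes_le_evenRes : oddRes G r p q ≤ evenRes G r p q :=
  le_iInf₂ fun S _ => oddRes_le_cutRes S

lemma evenRes_le_cutRes {S : Finset V} (hp : p ∈ S) (hq : q ∈ S) :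
    evenRes G r p q ≤ cutRes G r p q S :=
  iInf₂_le S ⟨hp, hq⟩

end Resistances

theorem shorting_and_cutting_laws_general
    (G : SimpleGraph V) [G.LocallyFinite]
    (r : V → V → ℝ)
    (p q : V) (S : Finset V) (hp : p ∈ S) (hq : q ∈ S) :
    shortRes G r p q S ≤ oddRes G r p q ∧
      oddRes G r p q ≤ evenRes G r p q ∧
      evenRes G r p q ≤ cutRes G r p q S :=
  ⟨shortRes_le_oddRes S, oddRes_le_evenRes, evenRes_le_cutRes hp hq⟩

/-- **Shorting and cutting laws for infinite networks.** For any finite vertex set `S`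
containing `p` and `q`,
`R_short(p,q,S) ≤ odd_res(p,q) ≤ even_res(p,q) ≤ R_cut(p,q,S)`. -/
theorem shorting_and_cutting_laws
    (G : SimpleGraph V) [G.LocallyFinite] (hG : G.Connected)
    (r : V → V → ℝ) (hr_pos : ∀ u v, G.Adj u v → 0 < r u v)
    (hr_symm : ∀ u v, r u v = r v u)
    (p q : V) (hpq : p ≠ q) (S : Finset V) (hp : p ∈ S) (hq : q ∈ S) :
    shortRes G r p q S ≤ oddRes G r p q ∧
      oddRes G r p q ≤ evenRes G r p q ∧
      evenRes G r p q ≤ cutRes G r p q S :=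
  shorting_and_cutting_laws_general G r p q S hp hq
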